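/- Assume 0 ≤ λ < 1 and that there exists T ∈ ℕ with c_τ = 0 and u_τ = 0 for all τ > T. Then for every t, the λ-weighted synthetic gradient G_t^λ := (1−λ) Σ_{n=1}^{∞} λ^{n−1} G_t^{(n)} admits the series expansion G_t^λ = Σ_{n=1}^{∞} (λγ)^{n−1} c_{t+n} P(t+n,t) + (1−λ) Σ_{n=1}^{∞} λ^{n−1} γ^n u_{t+n} P(t+n,t), where all three series have only finitely many nonzero terms. -/

import Mathlib

open Finset Matrix

noncomputable section

/-- Propagator `Pfrom J a n = P(a+n, a) = J_{a+n-1} ⋯ J_a`. -/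
def Pfrom {d : ℕ} (J : ℕ → Matrix (Fin d) (Fin d) ℝ) (a : ℕ) : ℕ → Matrix (Fin d) (Fin d) ℝ
  | 0 => 1
  | n + 1 => J (a + n) * Pfrom J a n

/-- Propagator `P J b a = P(b, a) = J_{b-1} ⋯ J_a` (for `b ≥ a`). -/
def P {d : ℕ} (J : ℕ → Matrix (Fin d) (Fin d) ℝ) (b a : ℕ) : Matrix (Fin d) (Fin d) ℝ :=
  Pfrom J a (b - a)

/-- The n-step synthetic gradient `G_a^{(n)}`. -/
def Gn {d : ℕ} (γ : ℝ) (J : ℕ → Matrix (Fin d) (Fin d) ℝ) (c u : ℕ → Fin d → ℝ)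
    (a n : ℕ) : Fin d → ℝ :=
  (∑ k ∈ Finset.range n, γ ^ k • Matrix.vecMul (c (a + k + 1)) (P J (a + k + 1) a))
    + γ ^ n • Matrix.vecMul (u (a + n)) (P J (a + n) a)

/-- The interim λ-weighted synthetic gradient `G_a^{λ|H}`. -/
def GLam {d : ℕ} (γ lam : ℝ) (J : ℕ → Matrix (Fin d) (Fin d) ℝ) (c u : ℕ → Fin d → ℝ)
    (a H : ℕ) : Fin d → ℝ :=
  (1 - lam) • (∑ n ∈ Finset.range (H - a - 1), lam ^ n • Gn γ J c u a (n + 1))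
    + lam ^ (H - a - 1) • Gn γ J c u a (H - a)

/-- The modified temporal-difference error `δ'_{a,t}`. -/
def δ' {d : ℕ} (γ : ℝ) (J : ℕ → Matrix (Fin d) (Fin d) ℝ) (c u : ℕ → Fin d → ℝ)
    (a t : ℕ) : Fin d → ℝ :=
  Matrix.vecMul (c (t + 1) + γ • u (t + 1)) (P J (t + 1) a) - Matrix.vecMul (u t) (P J t a)

/-- The temporal-difference error `δ_t`. -/
def δtd {d : ℕ} (γ : ℝ) (J : ℕ → Matrix (Fin d) (Fin d) ℝ) (c u w : ℕ → Fin d → ℝ)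
    (t : ℕ) : Fin d → ℝ :=
  Matrix.vecMul (c (t + 1) + γ • u (t + 1)) (P J (t + 1) t) - w t

/-- `δ_{a,t} = δ_t P(t,a)`. -/
def δab {d : ℕ} (γ : ℝ) (J : ℕ → Matrix (Fin d) (Fin d) ℝ) (c u w : ℕ → Fin d → ℝ)
    (a t : ℕ) : Fin d → ℝ :=
  Matrix.vecMul (δtd γ J c u w t) (P J t a)

/-! Since `c` and `u` vanish beyond `T`, the `u`-terms of the series are finitely many and can be
summed term by term, while the `c`-part of `G_t^{(n+1)}` is the partial sum `∑_{k ≤ n} a_k` of the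
finitely supported `a_k = γ^k c_{t+k+1} P(t+k+1, t)`. Exchanging the order of summation,
`∑_n λ^n ∑_{k ≤ n} a_k = ∑_k a_k ∑_{n ≥ k} λ^n = (1 - λ)⁻¹ ∑_k λ^k a_k`, and the factor `1 - λ`
cancels. -/

theorem hasSum_ite_le_geometric {r : ℝ} (hr0 : 0 ≤ r) (hr1 : r < 1) (k : ℕ) :
    HasSum (fun n => if k ≤ n then r ^ n else 0) (r ^ k * (1 - r)⁻¹) := by
  rw [← hasSum_nat_add_iff' k]
  simpa [Finset.sum_ite_of_false, pow_add, mul_comm] using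
    (hasSum_geometric_of_lt_one hr0 hr1).mul_left (r ^ k)

theorem sum_range_succ_eq_sum_ite_le {M : Type*} [AddCommMonoid M] {a : ℕ → M} {T : ℕ}
    (ha : ∀ k, T ≤ k → a k = 0) (n : ℕ) :
    ∑ k ∈ range (n + 1), a k = ∑ k ∈ range T, if k ≤ n then a k else 0 := by
  rw [← Finset.sum_filter]
  refine (Finset.sum_subset (fun k hk => ?_) fun k hk hkT => ha k ?_).symm
  · simp only [Finset.mem_filter, Finset.mem_range] at hk ⊢
    omega
  · simp_all [Finset.mem_filter, Finset.mem_range]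

theorem hasSum_geometric_smul_partialSums {V : Type*} [AddCommMonoid V] [Module ℝ V]
    [TopologicalSpace V] [ContinuousAdd V] [ContinuousSMul ℝ V] {r : ℝ} (hr0 : 0 ≤ r)
    (hr1 : r < 1) {a : ℕ → V} {T : ℕ} (ha : ∀ k, T ≤ k → a k = 0) :
    HasSum (fun n => r ^ n • ∑ k ∈ range (n + 1), a k)
      ((1 - r)⁻¹ • ∑ k ∈ range T, r ^ k • a k) := by
  simp_rw [sum_range_succ_eq_sum_ite_le ha, Finset.smul_sum, smul_ite, smul_zero, smul_smul]
  refine hasSum_sum fun k _ => ?_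
  simpa only [ite_smul, zero_smul, mul_comm] using
    (hasSum_ite_le_geometric hr0 hr1 k).smul_const (a k)

/-- assuming `0 ≤ λ < 1` and that `c_τ = 0` and `u_τ = 0` for all
`τ > T`, the λ-weighted synthetic gradient `G_t^λ := (1−λ) Σ_{n=1}^∞ λ^{n−1} G_t^{(n)}`
admits the series expansion
`G_t^λ = Σ_{n=1}^∞ (λγ)^{n−1} c_{t+n} P(t+n,t) + (1−λ) Σ_{n=1}^∞ λ^{n−1} γ^n u_{t+n} P(t+n,t)`,
where the defining series converges and the two series on the right-hand side
have only finitely many nonzero terms. -/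
theorem lambda_SG_series_expansion {d : ℕ} (γ lam : ℝ) (hlam0 : 0 ≤ lam) (hlam1 : lam < 1)
    (J : ℕ → Matrix (Fin d) (Fin d) ℝ) (c u : ℕ → Fin d → ℝ)
    (T : ℕ) (hc : ∀ τ, T < τ → c τ = 0) (hu : ∀ τ, T < τ → u τ = 0) (t : ℕ) :
    Summable (fun n : ℕ => lam ^ n • Gn γ J c u t (n + 1)) ∧
    (Function.support fun n : ℕ =>
        (lam * γ) ^ n • Matrix.vecMul (c (t + n + 1)) (P J (t + n + 1) t)).Finite ∧
    (Function.support fun n : ℕ =>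
        lam ^ n • γ ^ (n + 1) • Matrix.vecMul (u (t + n + 1)) (P J (t + n + 1) t)).Finite ∧
    (1 - lam) • ∑' n : ℕ, lam ^ n • Gn γ J c u t (n + 1)
      = (∑' n : ℕ, (lam * γ) ^ n • Matrix.vecMul (c (t + n + 1)) (P J (t + n + 1) t))
        + (1 - lam) •
            ∑' n : ℕ, lam ^ n • γ ^ (n + 1) • Matrix.vecMul (u (t + n + 1)) (P J (t + n + 1) t) := by
  set C : ℕ → Fin d → ℝ := fun n => Matrix.vecMul (c (t + n + 1)) (P J (t + n + 1) t)
  set U : ℕ → Fin d → ℝ := fun n => Matrix.vecMul (u (t + n + 1)) (P J (t + n + 1) t)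
  have hC : ∀ n, T ≤ n → (lam * γ) ^ n • C n = 0 := fun n hn => by
    simp [C, hc (t + n + 1) (by omega)]
  have hU : ∀ n, T ≤ n → lam ^ n • γ ^ (n + 1) • U n = 0 := fun n hn => by
    simp [U, hu (t + n + 1) (by omega)]
  have hCsum : HasSum (fun n => lam ^ n • ∑ k ∈ range (n + 1), γ ^ k • C k)
      ((1 - lam)⁻¹ • ∑ n ∈ range T, (lam * γ) ^ n • C n) := by
    simpa only [smul_smul, ← mul_pow] using hasSum_geometric_smul_partialSums hlam0 hlam1
      (a := fun k => γ ^ k • C k) fun k hk => by simp [C, hc (t + k + 1) (by omega)]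
  have hUsum : HasSum (fun n => lam ^ n • γ ^ (n + 1) • U n)
      (∑ n ∈ range T, lam ^ n • γ ^ (n + 1) • U n) :=
    hasSum_sum_of_ne_finset_zero fun n hn => hU n (by simpa using hn)
  have hGsum : HasSum (fun n => lam ^ n • Gn γ J c u t (n + 1))
      ((1 - lam)⁻¹ • ∑ n ∈ range T, (lam * γ) ^ n • C n
        + ∑ n ∈ range T, lam ^ n • γ ^ (n + 1) • U n) := by
    have hsum := hCsum.add hUsum
    simp only [← smul_add] at hsum
    exact hsum
  have hfinite : ∀ f : ℕ → Fin d → ℝ, (∀ n, T ≤ n → f n = 0) → (Function.support f).Finite :=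
    fun f hf => (range T).finite_toSet.subset fun n hn => by
      simpa using mt (hf n) hn
  refine ⟨hGsum.summable, hfinite _ hC, hfinite _ hU, ?_⟩
  rw [hGsum.tsum_eq, tsum_eq_sum (s := range T) fun n hn => hC n (by simpa using hn),
    tsum_eq_sum (s := range T) fun n hn => hU n (by simpa using hn), smul_add, smul_smul,
    mul_inv_cancel₀ (sub_ne_zero.mpr hlam1.ne'), one_smul]

end
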